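/- arXiv:2511.00899 — 6 statements merged into one kernel-verified Lean document; each statement's English description precedes it below -/
import Mathlib

section
/- (Soundness of the Negative Introspection axiom.) For every trustworthiness model, every world w ∈ W, every dataset U ⊆ V, all datasets T, X ⊆ V, and every formula φ ∈ Φ, if w,U ⊮ B^T_X φ, then w,U ⊩ B^∅_X ¬B^T_X φ. -/
/-- Formulas of the Dynamic Logic of Trust-Based Beliefs over data variables `V`
and atomic propositions `A`:  p | ¬φ | φ→φ | B^T_X φ | [X]φ. -/
inductive Formula (V A : Type) : Type
  | atom : A → Formula V A
  | neg  : Formula V A → Formula V A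
  | imp  : Formula V A → Formula V A → Formula V A
  | bel  : Set V → Set V → Formula V A → Formula V A   -- `bel T X φ` is B^T_X φ
  | ann  : Set V → Formula V A → Formula V A           -- `ann X φ` is [X]φ

/-- A trustworthiness model `(W, {∼ₓ}, {𝒯_w}, π)`. -/
structure TModel (V A : Type) where
  W : Type
  sim : V → W → W → Prop
  sim_equiv : ∀ x : V, Equivalence (sim x)
  trust : W → Set V
  pi : A → Set (W × Set V)

namespace TModel

variable {V A : Type} (M : TModel V A)

/-- `w ∼_X u` iff `w ∼ₓ u` for each `x ∈ X`. -/
def simSet (X : Set V) (w u : M.W) : Prop := ∀ x ∈ X, M.sim x w u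

/-- The satisfaction relation `w,U ⊩ φ`. -/
def Sat : Formula V A → M.W → Set V → Prop
  | .atom p, w, U => (w, U) ∈ M.pi p
  | .neg φ, w, U => ¬ Sat φ w U
  | .imp φ ψ, w, U => Sat φ w U → Sat ψ w U
  | .bel T X φ, w, U => ∀ w' : M.W, M.simSet (X ∪ U) w w' → T ⊆ M.trust w' → Sat φ w' U
  | .ann X φ, w, U => Sat φ w (U ∪ X)

end TModel

namespace TModel

variable {V A : Type} (M : TModel V A)

theorem simSet_equivalence (X : Set V) : Equivalence (M.simSet X) where
  refl _ x _ := (M.sim_equiv x).refl _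
  symm h x hx := (M.sim_equiv x).symm (h x hx)
  trans h₁ h₂ x hx := (M.sim_equiv x).trans (h₁ x hx) (h₂ x hx)

variable {M}

theorem sat_bel_congr {U T X : Set V} {φ : Formula V A} {w w' : M.W}
    (hw : M.simSet (X ∪ U) w w') :
    M.Sat (.bel T X φ) w U ↔ M.Sat (.bel T X φ) w' U := by
  have hclass : ∀ u, M.simSet (X ∪ U) w u ↔ M.simSet (X ∪ U) w' u := fun _ =>
    ⟨(M.simSet_equivalence _).trans ((M.simSet_equivalence _).symm hw),
      (M.simSet_equivalence _).trans hw⟩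
  simp only [Sat, hclass]

end TModel

/-- Soundness of the Negative Introspection axiom: if `w,U ⊮ B^T_X φ`,
then `w,U ⊩ B^∅_X ¬B^T_X φ`. -/
theorem negative_introspection_sound {V A : Type} (M : TModel V A) (w : M.W)
    (U T X : Set V) (φ : Formula V A)
    (h : ¬ M.Sat (.bel T X φ) w U) :
    M.Sat (.bel ∅ X (.neg (.bel T X φ))) w U := by
  intro w' hw _ hbel
  exact h ((TModel.sat_bel_congr hw).2 hbel)
end

section
/- (Soundness of the Trust axiom.) For every trustworthiness model, every world w ∈ W, every dataset U ⊆ V, all datasets T, X, Y ⊆ V, and every formula φ ∈ Φ, we have w,U ⊩ B^T_X(B^T_Y φ → φ). -/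
namespace TModel

variable {V A : Type} (M : TModel V A)

theorem simSet_refl (X : Set V) (w : M.W) : M.simSet X w w :=
  fun x _ => (M.sim_equiv x).refl w

theorem sat_of_sat_bel_of_subset_trust {T Y U : Set V} {w : M.W} {φ : Formula V A}
    (hT : T ⊆ M.trust w) (h : M.Sat (.bel T Y φ) w U) : M.Sat φ w U :=
  h w (M.simSet_refl _ w) hT

end TModel

/-- Soundness of the Trust axiom: `w,U ⊩ B^T_X (B^T_Y φ → φ)`. -/
theorem trust_axiom_sound {V A : Type} (M : TModel V A) (w : M.W)
    (U T X Y : Set V) (φ : Formula V A) :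
    M.Sat (.bel T X (.imp (.bel T Y φ) φ)) w U :=
  fun _ _ hT => M.sat_of_sat_bel_of_subset_trust hT
end

section
/- (Soundness of the Commutativity axiom.) For every trustworthiness model, every world w ∈ W, every dataset U ⊆ V, all datasets T, X, Y ⊆ V, and every formula φ ∈ Φ, we have w,U ⊩ [Y]B^T_X φ if and only if w,U ⊩ B^T_{X∪Y}[Y]φ. -/
/-- Soundness of the Commutativity axiom: `w,U ⊩ [Y]B^T_X φ` iff `w,U ⊩ B^T_{X∪Y}[Y]φ`. -/
theorem commutativity_sound {V A : Type} (M : TModel V A) (w : M.W)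
    (U T X Y : Set V) (φ : Formula V A) :
    M.Sat (.ann Y (.bel T X φ)) w U ↔ M.Sat (.bel T (X ∪ Y) (.ann Y φ)) w U := by
  have hdata : X ∪ (U ∪ Y) = X ∪ Y ∪ U := by rw [Set.union_right_comm, Set.union_assoc]
  simp only [TModel.Sat, hdata]
end

section
/- (Positive introspection, Lemma 4.) For all datasets T, X ⊆ V and every formula φ ∈ Φ, the formula B^T_X φ → B^∅_X B^T_X φ is a theorem: ⊢ B^T_X φ → B^∅_X B^T_X φ. -/
/-- `φ ∧ ψ`, defined through `¬` and `→` in the usual way. -/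
def Formula.conj {V A : Type} (φ ψ : Formula V A) : Formula V A :=
  .neg (.imp φ (.neg ψ))

/-- `φ ↔ ψ`, defined through `¬` and `→` in the usual way. -/
def Formula.iff {V A : Type} (φ ψ : Formula V A) : Formula V A :=
  Formula.conj (.imp φ ψ) (.imp ψ φ)

/-- Propositional tautologies in the language `Φ`: formulas true under every
assignment of truth values to formulas respecting `¬` and `→`. -/
def Tautology {V A : Type} (φ : Formula V A) : Prop :=
  ∀ v : Formula V A → Prop,
    (∀ ψ, v (.neg ψ) ↔ ¬ v ψ) →
    (∀ ψ χ, v (.imp ψ χ) ↔ (v ψ → v χ)) →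
    v φ

/-- Theorems of the Dynamic Logic of Trust-Based Beliefs: `⊢ φ`. -/
inductive Prv {V A : Type} : Formula V A → Prop
  | taut {φ : Formula V A} : Tautology φ → Prv φ
  | truth (X : Set V) (φ : Formula V A) : Prv (.imp (.bel ∅ X φ) φ)
  | distB (T X : Set V) (φ ψ : Formula V A) :
      Prv (.imp (.bel T X (.imp φ ψ)) (.imp (.bel T X φ) (.bel T X ψ)))
  | distA (X : Set V) (φ ψ : Formula V A) :
      Prv (.imp (.ann X (.imp φ ψ)) (.imp (.ann X φ) (.ann X ψ)))
  | negIntro (T X : Set V) (φ : Formula V A) :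
      Prv (.imp (.neg (.bel T X φ)) (.bel ∅ X (.neg (.bel T X φ))))
  | mono {T T' X X' : Set V} (φ : Formula V A) :
      T ⊆ T' → X ⊆ X' → Prv (.imp (.bel T X φ) (.bel T' X' φ))
  | trust (T X Y : Set V) (φ : Formula V A) : Prv (.bel T X (.imp (.bel T Y φ) φ))
  | comb (X Y : Set V) (φ : Formula V A) :
      Prv (Formula.iff (.ann X (.ann Y φ)) (.ann (X ∪ Y) φ))
  | comm (T X Y : Set V) (φ : Formula V A) :
      Prv (Formula.iff (.ann Y (.bel T X φ)) (.bel T (Y ∪ X) (.ann Y φ)))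
  | dual (X : Set V) (φ : Formula V A) :
      Prv (Formula.iff (.neg (.ann X φ)) (.ann X (.neg φ)))
  | empty (φ : Formula V A) : Prv (Formula.iff (.ann ∅ φ) φ)
  | mp {φ ψ : Formula V A} : Prv (.imp φ ψ) → Prv φ → Prv ψ
  | necB (T X : Set V) {φ : Formula V A} : Prv φ → Prv (.bel T X φ)
  | necA (X : Set V) {φ : Formula V A} : Prv φ → Prv (.ann X φ)

/-- `F ⊢ φ`: φ is derivable from theorems of the system and the set of
additional assumptions `F` using the Modus Ponens inference rule only. -/
inductive Deriv {V A : Type} (F : Set (Formula V A)) : Formula V A → Prop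
  | thm {φ : Formula V A} : Prv φ → Deriv F φ
  | hyp {φ : Formula V A} : φ ∈ F → Deriv F φ
  | mp {φ ψ : Formula V A} : Deriv F (.imp φ ψ) → Deriv F φ → Deriv F ψ

/-- A set of formulas is consistent if no formula and its negation are both derivable. -/
def Consistent {V A : Type} (F : Set (Formula V A)) : Prop :=
  ¬ ∃ φ : Formula V A, Deriv F φ ∧ Deriv F (.neg φ)

/-- A maximal consistent set: a consistent set not properly contained in any consistent set. -/
def MaxConsistent {V A : Type} (F : Set (Formula V A)) : Prop :=
  Consistent F ∧ ∀ G : Set (Formula V A), F ⊆ G → Consistent G → G = F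

/-! Write `K` for `B^∅_X` and `β` for `B^T_X φ`. Truth for `¬β` gives `β → ¬K¬β`, negative
introspection for `¬β` gives `¬K¬β → K¬K¬β`, and negative introspection for `β`, read
contrapositively as `¬K¬β → β` and pushed under `K`, gives `K¬K¬β → Kβ`. -/

namespace Prv

variable {V A : Type}

lemma imp_trans {a b c : Formula V A} (hab : Prv (.imp a b)) (hbc : Prv (.imp b c)) :
    Prv (.imp a c) := by
  have t : Tautology (Formula.imp (.imp a b) (.imp (.imp b c) (.imp a c))) := by
    intro v _ hi
    simp only [hi]
    tauto
  exact mp (mp (taut t) hab) hbc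

lemma imp_neg_comm {a b : Formula V A} (h : Prv (.imp a (.neg b))) :
    Prv (.imp b (.neg a)) := by
  have t : Tautology (Formula.imp (.imp a (.neg b)) (.imp b (.neg a))) := by
    intro v hn hi
    simp only [hi, hn]
    tauto
  exact mp (taut t) h

lemma neg_imp_comm {a b : Formula V A} (h : Prv (.imp (.neg a) b)) :
    Prv (.imp (.neg b) a) := by
  have t : Tautology (Formula.imp (.imp (.neg a) b) (.imp (.neg b) a)) := by
    intro v hn hi
    simp only [hi, hn]
    tauto
  exact mp (taut t) h

lemma bel_imp_bel (T X : Set V) {a b : Formula V A} (h : Prv (.imp a b)) :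
    Prv (.imp (.bel T X a) (.bel T X b)) :=
  mp (distB T X a b) (necB T X h)

end Prv

/-- Positive introspection (Lemma 4): `⊢ B^T_X φ → B^∅_X B^T_X φ`. -/
theorem positive_introspection {V A : Type} (T X : Set V) (φ : Formula V A) :
    Prv (Formula.imp (.bel T X φ) (.bel ∅ X (.bel T X φ))) := by
  set β : Formula V A := .bel T X φ
  have possible_of_belief : Prv (.imp β (.neg (.bel ∅ X (.neg β)))) :=
    Prv.imp_neg_comm (Prv.truth X (.neg β))
  have belief_of_possible : Prv (.imp (.neg (.bel ∅ X (.neg β))) β) :=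
    Prv.neg_imp_comm (Prv.negIntro T X φ)
  exact Prv.imp_trans possible_of_belief <|
    Prv.imp_trans (Prv.negIntro ∅ X (.neg β)) (Prv.bel_imp_bel ∅ X belief_of_possible)
end

section
/- (Lemma 8, 'child all'.) In the canonical model M(T₀,F₀), for any worlds w, u ∈ W, any datasets T, X ⊆ V, and any formula φ ∈ Φ with B^T_X φ ∈ F(w), if w ∼_X u and T ⊆ 𝒯_u, then φ ∈ F(u). -/
/-- A triple `(Xᵢ, Tᵢ, Fᵢ)` labelling one step of a canonical-model world. -/
abbrev Triple (V A : Type) := Set V × Set V × Set (Formula V A)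

/-- Condition on a node labelled `T, F` of the canonical tree: `F` is a maximal
consistent set and `B^T_Y φ → φ ∈ F` for every dataset `Y` and formula `φ`. -/
def NodeOk {V A : Type} (T : Set V) (F : Set (Formula V A)) : Prop :=
  MaxConsistent F ∧ ∀ (Y : Set V) (φ : Formula V A), Formula.imp (.bel T Y φ) φ ∈ F

/-- `T(w)`: the last dataset `Tₙ` of the world `w` (worlds are written as lists of
triples with the most recent triple first; the empty list is the root `T₀, F₀`). -/
def worldT {V A : Type} (T₀ : Set V) : List (Triple V A) → Set V
  | [] => T₀
  | (_, T, _) :: _ => T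

/-- `F(w)`: the last set of formulas `Fₙ` of the world `w`. -/
def worldF {V A : Type} (F₀ : Set (Formula V A)) : List (Triple V A) → Set (Formula V A)
  | [] => F₀
  | (_, _, F) :: _ => F

/-- Worlds of the canonical model `M(T₀,F₀)`: sequences
`T₀,F₀,X₁,T₁,F₁,…,Xₙ,Tₙ,Fₙ` such that each `Fᵢ` is a maximal consistent set with
(a) `ψ ∈ Fᵢ` whenever `B^∅_{Xᵢ} ψ ∈ F_{i-1}` (for `i > 0`), and
(b) `B^{Tᵢ}_Y φ → φ ∈ Fᵢ` for every dataset `Y` and formula `φ`. -/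
def IsWorld {V A : Type} (T₀ : Set V) (F₀ : Set (Formula V A)) :
    List (Triple V A) → Prop
  | [] => NodeOk T₀ F₀
  | (X, T, F) :: rest =>
      IsWorld T₀ F₀ rest ∧ NodeOk T F ∧
        ∀ ψ : Formula V A, Formula.bel ∅ X ψ ∈ worldF F₀ rest → ψ ∈ F

/-- `u ∼ₓ v` in the canonical model: every edge along the unique simple path in the
tree between `u` and `v` is labelled with the variable `x`; equivalently, `u` and `v`
have a common ancestor `c` such that every edge between `c` and `u` and every edge
between `c` and `v` is labelled with `x`. -/
def csim {V A : Type} (x : V) (u v : List (Triple V A)) : Prop :=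
  ∃ c d₁ d₂ : List (Triple V A),
    u = d₁ ++ c ∧ v = d₂ ++ c ∧ (∀ t ∈ d₁, x ∈ t.1) ∧ (∀ t ∈ d₂, x ∈ t.1)

/-!
A belief `B^T_X φ` passes along an edge labelled by a superset of `X` in both directions:
from child to parent by Negative Introspection (if `¬B^T_X φ` held at the parent, then so would
`B^∅_X ¬B^T_X φ`, forcing `¬B^T_X φ` at the child), and from parent to child by positive
introspection `B^T_X φ → B^∅_X B^T_X φ`, which follows from Truth and Negative Introspection.
If `w ∼_X u`, every edge between `u`, `w` and their lowest common ancestor is labelled by all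
of `X`, so `B^T_X φ ∈ F(u)`; Monotonicity gives `B^{T(u)}_X φ ∈ F(u)`, and condition (b) on
the node `u` then yields `φ ∈ F(u)`.
-/

namespace List

theorem exists_greatest_common_suffix {α : Type*} (l₁ l₂ : List α) :
    ∃ c, c <:+ l₁ ∧ c <:+ l₂ ∧ ∀ c', c' <:+ l₁ → c' <:+ l₂ → c' <:+ c := by
  classical
  have hex : ∃ n, l₁.drop n <:+ l₂ := ⟨l₁.length, by simp⟩
  refine ⟨l₁.drop (Nat.find hex), drop_suffix _ _, Nat.find_spec hex, fun c' h₁ h₂ => ?_⟩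
  rw [suffix_iff_eq_drop] at h₁
  rw [h₁] at h₂ ⊢
  exact drop_suffix_drop_left _ (Nat.find_min' hex h₂)

theorem forall_mem_of_append_eq_append {α : Type*} {P : α → Prop} {d e c c' : List α}
    (h : d ++ c = e ++ c') (hc : c' <:+ c) (he : ∀ t ∈ e, P t) : ∀ t ∈ d, P t := by
  obtain ⟨g, rfl⟩ := hc
  have : e = d ++ g := append_cancel_right (by simpa using h.symm)
  exact fun t ht => he t (this ▸ mem_append_left g ht)

end List

section

variable {V A : Type}

namespace Prv

theorem imp_trans_s15 {p q r : Formula V A} (h₁ : Prv (.imp p q)) (h₂ : Prv (.imp q r)) :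
    Prv (.imp p r) :=
  have t : Prv (V := V) (A := A) (.imp (.imp p q) (.imp (.imp q r) (.imp p r))) :=
    Prv.taut (by intro v _ hi; simp only [hi]; tauto)
  Prv.mp (Prv.mp t h₁) h₂

theorem not_imp_comm {p q : Formula V A} (h : Prv (.imp (.neg p) q)) :
    Prv (.imp (.neg q) p) :=
  have t : Prv (V := V) (A := A) (.imp (.imp (.neg p) q) (.imp (.neg q) p)) :=
    Prv.taut (by intro v hn hi; simp only [hi, hn]; tauto)
  Prv.mp t h

theorem imp_not_comm {p q : Formula V A} (h : Prv (.imp p (.neg q))) :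
    Prv (.imp q (.neg p)) :=
  have t : Prv (V := V) (A := A) (.imp (.imp p (.neg q)) (.imp q (.neg p))) :=
    Prv.taut (by intro v hn hi; simp only [hi, hn]; tauto)
  Prv.mp t h

theorem posIntro (T X : Set V) (φ : Formula V A) :
    Prv (.imp (.bel T X φ) (.bel ∅ X (.bel T X φ))) := by
  set β : Formula V A := .bel T X φ
  have h_truth : Prv (.imp β (.neg (.bel ∅ X (.neg β)))) := imp_not_comm (Prv.truth X _)
  have h_neg : Prv (.imp (.neg (.bel ∅ X (.neg β))) (.bel ∅ X (.neg (.bel ∅ X (.neg β))))) :=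
    Prv.negIntro ∅ X _
  have h_nec : Prv (.imp (.bel ∅ X (.neg (.bel ∅ X (.neg β)))) (.bel ∅ X β)) :=
    Prv.mp (Prv.distB ∅ X _ _) (Prv.necB ∅ X (not_imp_comm (Prv.negIntro T X φ)))
  exact imp_trans_s15 (imp_trans_s15 h_truth h_neg) h_nec

end Prv

theorem Deriv.imp_intro {F : Set (Formula V A)} {φ ψ : Formula V A}
    (h : Deriv (insert φ F) ψ) : Deriv F (.imp φ ψ) := by
  have hK : ∀ χ : Formula V A, Prv (.imp χ (.imp φ χ)) := fun χ =>
    Prv.taut (by intro v _ hi; simp only [hi]; tauto)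
  induction h with
  | thm h => exact Deriv.mp (Deriv.thm (hK _)) (Deriv.thm h)
  | hyp h =>
    rcases h with rfl | h
    · exact Deriv.thm (Prv.taut (by intro v _ hi; simp only [hi]; tauto))
    · exact Deriv.mp (Deriv.thm (hK _)) (Deriv.hyp h)
  | @mp χ ψ _ _ ih₁ ih₂ =>
    have hS : Prv (V := V) (A := A)
        (.imp (.imp φ (.imp χ ψ)) (.imp (.imp φ χ) (.imp φ ψ))) :=
      Prv.taut (by intro v _ hi; simp only [hi]; tauto)
    exact Deriv.mp (Deriv.mp (Deriv.thm hS) ih₁) ih₂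

namespace MaxConsistent

variable {F : Set (Formula V A)} {φ ψ : Formula V A}

theorem mem_of_deriv (hF : MaxConsistent F) (h : Deriv F φ) : φ ∈ F := by
  have hcons : Consistent (insert φ F) := by
    rintro ⟨χ, h₁, h₂⟩
    exact hF.1 ⟨χ, Deriv.mp h₁.imp_intro h, Deriv.mp h₂.imp_intro h⟩
  rw [← hF.2 _ (Set.subset_insert φ F) hcons]
  exact Set.mem_insert φ F

theorem neg_mem_of_notMem (hF : MaxConsistent F) (h : φ ∉ F) : Formula.neg φ ∈ F := by
  have hincons : ¬ Consistent (insert φ F) := fun hc =>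
    h (hF.2 _ (Set.subset_insert φ F) hc ▸ Set.mem_insert φ F)
  obtain ⟨χ, h₁, h₂⟩ := not_not.mp hincons
  have t : Prv (V := V) (A := A) (.imp (.imp φ χ) (.imp (.imp φ (.neg χ)) (.neg φ))) :=
    Prv.taut (by intro v hn hi; simp only [hi, hn]; tauto)
  exact hF.mem_of_deriv (Deriv.mp (Deriv.mp (Deriv.thm t) h₁.imp_intro) h₂.imp_intro)

theorem notMem_of_neg_mem (hF : MaxConsistent F) (h : Formula.neg φ ∈ F) : φ ∉ F :=
  fun hφ => hF.1 ⟨φ, Deriv.hyp hφ, Deriv.hyp h⟩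

theorem mem_of_prv_imp (hF : MaxConsistent F) (h : Prv (.imp φ ψ)) (hφ : φ ∈ F) : ψ ∈ F :=
  hF.mem_of_deriv (Deriv.mp (Deriv.thm h) (Deriv.hyp hφ))

theorem mem_of_imp_mem (hF : MaxConsistent F) (h : Formula.imp φ ψ ∈ F) (hφ : φ ∈ F) :
    ψ ∈ F :=
  hF.mem_of_deriv (Deriv.mp (Deriv.hyp h) (Deriv.hyp hφ))

end MaxConsistent

theorem bel_mem_child_iff {Fp Fc : Set (Formula V A)} {X' T X : Set V} {φ : Formula V A}
    (hFp : MaxConsistent Fp) (hFc : MaxConsistent Fc)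
    (hchild : ∀ ψ : Formula V A, Formula.bel ∅ X' ψ ∈ Fp → ψ ∈ Fc) (hX : X ⊆ X') :
    Formula.bel T X φ ∈ Fc ↔ Formula.bel T X φ ∈ Fp := by
  constructor
  · intro hc
    by_contra hp
    have h : Formula.bel ∅ X' (.neg (.bel T X φ)) ∈ Fp :=
      hFp.mem_of_prv_imp (Prv.imp_trans_s15 (Prv.negIntro T X φ) (Prv.mono _ subset_rfl hX))
        (hFp.neg_mem_of_notMem hp)
    exact hFc.notMem_of_neg_mem (hchild _ h) hc
  · intro hp
    exact hchild _ (hFp.mem_of_prv_imp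
      (Prv.imp_trans_s15 (Prv.posIntro T X φ) (Prv.mono _ subset_rfl hX)) hp)

section CanonicalModel

variable {T₀ : Set V} {F₀ : Set (Formula V A)}

theorem IsWorld.nodeOk {w : List (Triple V A)} (h : IsWorld T₀ F₀ w) :
    NodeOk (worldT T₀ w) (worldF F₀ w) := by
  match w, h with
  | [], h => exact h
  | (_, _, _) :: _, h => exact h.2.1

theorem bel_mem_worldF_append_iff {T X : Set V} {φ : Formula V A} {c : List (Triple V A)} :
    ∀ {d : List (Triple V A)}, IsWorld T₀ F₀ (d ++ c) → (∀ t ∈ d, X ⊆ t.1) →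
      (Formula.bel T X φ ∈ worldF F₀ (d ++ c) ↔ Formula.bel T X φ ∈ worldF F₀ c)
  | [], _, _ => Iff.rfl
  | (_, _, _) :: _, h, hd =>
    (bel_mem_child_iff h.1.nodeOk.1 h.2.1.1 h.2.2 (hd _ List.mem_cons_self)).trans
      (bel_mem_worldF_append_iff h.1 fun t ht => hd t (List.mem_cons_of_mem _ ht))

theorem exists_common_ancestor_of_csim {X : Set V} {w u : List (Triple V A)}
    (hsim : ∀ x ∈ X, csim x w u) :
    ∃ c d₁ d₂ : List (Triple V A), w = d₁ ++ c ∧ u = d₂ ++ c ∧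
      (∀ t ∈ d₁, X ⊆ t.1) ∧ (∀ t ∈ d₂, X ⊆ t.1) := by
  obtain ⟨c, ⟨d₁, hw⟩, ⟨d₂, hu⟩, hc⟩ := List.exists_greatest_common_suffix w u
  refine ⟨c, d₁, d₂, hw.symm, hu.symm, fun t ht x hx => ?_, fun t ht x hx => ?_⟩
  all_goals
    obtain ⟨cx, e₁, e₂, hw', hu', he₁, he₂⟩ := hsim x hx
    have hcx : cx <:+ c := hc cx ⟨e₁, hw'.symm⟩ ⟨e₂, hu'.symm⟩
  · exact List.forall_mem_of_append_eq_append (hw.trans hw') hcx he₁ t ht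
  · exact List.forall_mem_of_append_eq_append (hu.trans hu') hcx he₂ t ht

end CanonicalModel

end

/-- Lemma 8 ("child all"): in the canonical model, for any worlds `w, u` and any
formula `B^T_X φ ∈ F(w)`, if `w ∼_X u` and `T ⊆ 𝒯_u`, then `φ ∈ F(u)`. -/
theorem child_all {V A : Type} (T₀ : Set V) (F₀ : Set (Formula V A))
    (w u : List (Triple V A)) (hw : IsWorld T₀ F₀ w) (hu : IsWorld T₀ F₀ u)
    (T X : Set V) (φ : Formula V A)
    (hB : Formula.bel T X φ ∈ worldF F₀ w)
    (hsim : ∀ x ∈ X, csim x w u) (hT : T ⊆ worldT T₀ u) :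
    φ ∈ worldF F₀ u := by
  obtain ⟨c, d₁, d₂, rfl, rfl, hd₁, hd₂⟩ := exists_common_ancestor_of_csim hsim
  have hBu : Formula.bel T X φ ∈ worldF F₀ (d₂ ++ c) :=
    (bel_mem_worldF_append_iff hu hd₂).2 ((bel_mem_worldF_append_iff hw hd₁).1 hB)
  obtain ⟨hmcs, hreflect⟩ := hu.nodeOk
  exact hmcs.mem_of_imp_mem (hreflect X φ) (hmcs.mem_of_prv_imp (Prv.mono φ hT subset_rfl) hBu)
end

section
/- (Consistency of the witness set in the proof of Lemma 9.) In the canonical model M(T₀,F₀), for any world w ∈ W, any datasets U, T, X ⊆ V, and any formula φ ∈ Φ such that [U]B^T_X φ ∉ F(w), the set of formulas G = {¬[U]φ} ∪ {ψ : B^∅_{U∪X} ψ ∈ F(w)} ∪ {B^T_Y χ → χ : Y ⊆ V, χ ∈ Φ} is consistent. -/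
/-!
If the witness set were inconsistent, the formulas `{ψ | B^∅_{U∪X} ψ ∈ F(w)}` together with
the trust formulas `B^T_Y χ → χ` would derive `[U]φ`. Each of these hypotheses is believed
under `B^T_{U∪X}` in `F(w)` (by Monotonicity, resp. Trust), so Necessitation and Distributivity
carry the derivation under the belief operator: `F(w) ⊢ B^T_{U∪X}[U]φ`. Commutativity turns
this into `[U]B^T_X φ ∈ F(w)`.
-/

namespace Prv

variable {V A : Type}

theorem imp_of_iff_right {φ ψ : Formula V A} (h : Prv (φ.iff ψ)) : Prv (.imp ψ φ) :=
  .mp (.taut fun v hn hi => by simp only [Formula.iff, Formula.conj, hi, hn]; tauto) h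

end Prv

namespace Deriv

variable {V A : Type} {F : Set (Formula V A)}

theorem imp_of_insert {φ ψ : Formula V A} (h : Deriv (insert φ F) ψ) :
    Deriv F (.imp φ ψ) := by
  induction h with
  | thm hψ => exact .mp (.thm (.taut fun v _ hi => by simp only [hi]; tauto)) (.thm hψ)
  | hyp hψ =>
    rcases Set.mem_insert_iff.mp hψ with rfl | hψ
    · exact .thm (.taut fun v _ hi => by simp only [hi]; tauto)
    · exact .mp (.thm (.taut fun v _ hi => by simp only [hi]; tauto)) (.hyp hψ)
  | mp _ _ ih₁ ih₂ =>
    exact .mp (.mp (.thm (.taut fun v _ hi => by simp only [hi]; tauto)) ih₁) ih₂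

theorem of_not_consistent_insert_neg {φ : Formula V A}
    (h : ¬ Consistent (insert (.neg φ) F)) : Deriv F φ := by
  obtain ⟨χ, hχ, hnχ⟩ := not_not.mp h
  exact .mp (.mp (.thm (.taut fun v hn hi => by simp only [hi, hn]; tauto))
    (imp_of_insert hχ)) (imp_of_insert hnχ)

theorem bel_of_forall_hyp {G : Set (Formula V A)} {T X : Set V}
    (hG : ∀ χ ∈ G, Deriv F (.bel T X χ)) {φ : Formula V A} (h : Deriv G φ) :
    Deriv F (.bel T X φ) := by
  induction h with
  | thm hφ => exact .thm (.necB T X hφ)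
  | hyp hφ => exact hG _ hφ
  | mp _ _ ih₁ ih₂ => exact .mp (.mp (.thm (.distB _ _ _ _)) ih₁) ih₂

end Deriv

variable {V A : Type}

theorem MaxConsistent.mem_of_deriv_s17 {F : Set (Formula V A)} (hF : MaxConsistent F)
    {φ : Formula V A} (h : Deriv F φ) : φ ∈ F := by
  have hcons : Consistent (insert φ F) := fun ⟨χ, hχ, hnχ⟩ =>
    hF.1 ⟨χ, .mp hχ.imp_of_insert h, .mp hnχ.imp_of_insert h⟩
  rw [← hF.2 _ (Set.subset_insert _ _) hcons]
  exact Set.mem_insert _ _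

theorem IsWorld.maxConsistent_worldF {T₀ : Set V} {F₀ : Set (Formula V A)}
    {w : List (Triple V A)} (hw : IsWorld T₀ F₀ w) : MaxConsistent (worldF F₀ w) := by
  match w, hw with
  | [], hw => exact hw.1
  | (_, _, _) :: _, hw => exact hw.2.1.1

theorem deriv_bel_of_deriv_beliefs_and_trust {F : Set (Formula V A)} {T Z : Set V}
    {φ : Formula V A}
    (h : Deriv ({ψ | Formula.bel ∅ Z ψ ∈ F} ∪
      {χ | ∃ (Y : Set V) (ψ : Formula V A), χ = Formula.imp (.bel T Y ψ) ψ}) φ) :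
    Deriv F (.bel T Z φ) := by
  refine Deriv.bel_of_forall_hyp ?_ h
  rintro χ (hχ | ⟨Y, ψ, rfl⟩)
  · exact .mp (.thm (.mono _ (Set.empty_subset T) le_rfl)) (.hyp hχ)
  · exact .thm (.trust T Z Y ψ)

/-- Consistency of the witness set in the proof of Lemma 9: if `[U]B^T_X φ ∉ F(w)`,
then `G = {¬[U]φ} ∪ {ψ | B^∅_{U∪X} ψ ∈ F(w)} ∪ {B^T_Y χ → χ | Y ⊆ V, χ ∈ Φ}`
is consistent. -/
theorem witness_set_consistent {V A : Type} (T₀ : Set V) (F₀ : Set (Formula V A))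
    (w : List (Triple V A)) (hw : IsWorld T₀ F₀ w)
    (U T X : Set V) (φ : Formula V A)
    (h : Formula.ann U (.bel T X φ) ∉ worldF F₀ w) :
    Consistent ({Formula.neg (.ann U φ)} ∪
      {ψ | Formula.bel ∅ (U ∪ X) ψ ∈ worldF F₀ w} ∪
      {χ | ∃ (Y : Set V) (ψ : Formula V A), χ = Formula.imp (.bel T Y ψ) ψ}) := by
  by_contra hG
  rw [Set.union_assoc, Set.singleton_union] at hG
  have hann : Deriv _ (Formula.ann U φ) := Deriv.of_not_consistent_insert_neg hG
  have hbel : Deriv (worldF F₀ w) (.bel T (U ∪ X) (.ann U φ)) :=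
    deriv_bel_of_deriv_beliefs_and_trust hann
  have hcomm := (Prv.comm T X U φ).imp_of_iff_right
  exact h (hw.maxConsistent_worldF.mem_of_deriv_s17 (.mp (.thm hcomm) hbel))
end
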